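/- arXiv:2408.06091 — 2 statements merged into one kernel-verified Lean document; each statement's English description precedes it below -/
import Mathlib

section
/- Let k ≥ 2 and n = 4k, and let 0 < d_1 < ... < d_{2k} satisfy d_{|i|_n} + d_{|j|_n} ≥ d_{|i+j|_n} for all integers i, j. Define a distance on the 4k points {A_0,...,A_{2k-1}, B_0,...,B_{2k-1}} by d(A_i,A_j) = d(B_i,B_j) = d_{|j-i|_{2k}} and d(A_i,B_j) = d_{k + |j-i|_{2k}}. Then this distance satisfies the triangle inequality on every triple of distinct points. -/
/-!
On the `2k`-gon, the circular lengths `a`, `b`, `c` of the three sides of a triangle satisfy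
`c ≤ a + b` and `a + b + c ≤ 2k`. A path inside one polygon is then controlled by the circular
triangle inequality on the `4k`-gon at the steps `a` and `b`, and a path `A → A → B` by the one at
the steps `a` and `k + b`: their sum `k + a + b` lies at circular distance at least `k + c` from
`0` precisely because `a + b + c ≤ 2k`. A path `A → B → A` is longer than the corresponding path
inside `A`, by monotonicity of `d`.
-/

noncomputable def circAbs (m : ℕ) (i : ℤ) : ℤ :=
  sInf {a : ℤ | ∃ l : ℤ, a = |i - l * (m : ℤ)|}

lemma circAbs_le (m : ℕ) (i l : ℤ) : circAbs m i ≤ |i - l * m| :=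
  csInf_le ⟨0, fun _ ⟨_, h⟩ => h ▸ abs_nonneg _⟩ ⟨l, rfl⟩

section CircAbs

variable {m : ℕ}

lemma le_circAbs {i c : ℤ} (h : ∀ l : ℤ, c ≤ |i - l * m|) : c ≤ circAbs m i :=
  le_csInf ⟨_, 0, rfl⟩ fun _ ⟨l, hl⟩ => hl ▸ h l

theorem circAbs_eq_min_emod (hm : 0 < m) (i : ℤ) :
    circAbs m i = min (i % m) (m - i % m) := by
  have hm' : (0 : ℤ) < m := by exact_mod_cast hm
  have hr0 : 0 ≤ i % m := Int.emod_nonneg i hm'.ne'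
  have hrm : i % m < m := Int.emod_lt_of_pos i hm'
  have hdiv : i - i / m * m = i % m := by rw [Int.emod_def]; ring
  apply le_antisymm
  · refine le_min ?_ ?_
    · simpa [hdiv, abs_of_nonneg hr0] using circAbs_le m i (i / m)
    · calc circAbs m i ≤ |i - (i / m + 1) * m| := circAbs_le m i _
        _ = m - i % m := by rw [add_one_mul, ← sub_sub, hdiv, abs_of_neg (by linarith)]; ring
  · refine le_circAbs fun l => ?_
    have hshift : i - l * m = i % m + (i / m - l) * m := by rw [← hdiv]; ring
    rw [hshift]
    rcases le_or_gt 0 (i / m - l) with ht | ht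
    · have : 0 ≤ (i / m - l) * m := mul_nonneg ht hm'.le
      exact (min_le_left _ _).trans (le_abs.mpr (Or.inl (by linarith)))
    · have : (i / m - l + 1) * m ≤ 0 := mul_nonpos_of_nonpos_of_nonneg (by omega) hm'.le
      exact (min_le_right _ _).trans (le_abs.mpr (Or.inr (by linarith)))

lemma circAbs_natCast (hm : 0 < m) {s : ℕ} (h : 2 * s ≤ m) : circAbs m s = s := by
  rw [circAbs_eq_min_emod hm, Int.emod_eq_of_lt (by omega) (by omega)]
  omega

lemma two_mul_circAbs_le (hm : 0 < m) (i : ℤ) : 2 * circAbs m i ≤ m := by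
  rw [circAbs_eq_min_emod hm]
  omega

lemma circAbs_nonneg (hm : 0 < m) (i : ℤ) : 0 ≤ circAbs m i := by
  rw [circAbs_eq_min_emod hm]
  have := Int.emod_nonneg i (b := m) (by omega)
  have := Int.emod_lt_of_pos i (b := m) (by omega)
  omega

theorem circAbs_add_le_and_perimeter_le (hm : 0 < m) (a b : ℤ) :
    circAbs m (a + b) ≤ circAbs m a + circAbs m b ∧
      circAbs m a + circAbs m b + circAbs m (a + b) ≤ m := by
  have hm' : (0 : ℤ) < m := by exact_mod_cast hm
  simp only [circAbs_eq_min_emod hm, Int.add_emod a b]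
  have := Int.emod_nonneg a hm'.ne'
  have := Int.emod_nonneg b hm'.ne'
  have := Int.emod_lt_of_pos a hm'
  have := Int.emod_lt_of_pos b hm'
  rcases lt_or_ge (a % m + b % m) m with h | h
  · rw [Int.emod_eq_of_lt (by omega) h]
    omega
  · rw [← Int.sub_emod_right, Int.emod_eq_of_lt (by omega) (by omega)]
    omega

end CircAbs

section Mutant

variable {k : ℕ} {d : ℕ → ℝ}

lemma le_add_of_le_circAbs (hk : 0 < k) (hmon : MonotoneOn d (Set.Iic (2 * k)))
    (hcirc : ∀ i j : ℤ,
      d (circAbs (4 * k) i).toNat + d (circAbs (4 * k) j).toNat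
        ≥ d (circAbs (4 * k) (i + j)).toNat)
    {s t u : ℕ} (hs : s ≤ 2 * k) (ht : t ≤ 2 * k) (hu : (u : ℤ) ≤ circAbs (4 * k) (s + t)) :
    d u ≤ d s + d t := by
  have h := hcirc s t
  rw [circAbs_natCast (by omega) (by omega), circAbs_natCast (by omega) (by omega),
    Int.toNat_natCast, Int.toNat_natCast] at h
  have hhalf := two_mul_circAbs_le (m := 4 * k) (by omega) (s + t)
  exact (hmon (Set.mem_Iic.2 (by omega)) (Set.mem_Iic.2 (by omega)) (by omega)).trans h

variable (hk : 0 < k) (hmon : MonotoneOn d (Set.Iic (2 * k)))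
  (hcirc : ∀ i j : ℤ,
      d (circAbs (4 * k) i).toNat + d (circAbs (4 * k) j).toNat
        ≥ d (circAbs (4 * k) (i + j)).toNat)
  {a b c : ℕ}

include hk hmon hcirc

lemma mutant_same_le (hab : a + b ≤ 2 * k) (hc : c ≤ a + b) : d c ≤ d a + d b :=
  le_add_of_le_circAbs hk hmon hcirc (by omega) (by omega)
    (by rw [← Nat.cast_add, circAbs_natCast (by omega) (by omega)]; omega)

lemma mutant_cross_le (hb : b ≤ k) (hc : c ≤ a + b) (hper : a + b + c ≤ 2 * k) :
    d (k + c) ≤ d a + d (k + b) := by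
  refine le_add_of_le_circAbs hk hmon hcirc (by omega) (by omega) ?_
  rw [← Nat.cast_add, circAbs_eq_min_emod (by omega), Int.emod_eq_of_lt (by omega) (by omega)]
  omega

/-- `a`, `b`, `c` stand for the circular lengths of the sides `j - i`, `l - j`, `l - i` of a
triangle of indices, and `p`, `q`, `r` for the polygons of its three vertices. -/
theorem mutant_triangle (ha : a ≤ k) (hb : b ≤ k) (hc : c ≤ a + b) (hper : a + b + c ≤ 2 * k)
    (p q r : Bool) :
    (if p = r then d c else d (k + c)) ≤
      (if p = q then d a else d (k + a)) + (if q = r then d b else d (k + b)) := by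
  have same := mutant_same_le hk hmon hcirc (by omega) hc
  have cross := mutant_cross_le hk hmon hcirc hb hc hper
  have cross' := mutant_cross_le (a := b) (c := c) hk hmon hcirc ha (by omega) (by omega)
  have hda : d a ≤ d (k + a) := hmon (Set.mem_Iic.2 (by omega)) (Set.mem_Iic.2 (by omega))
    (by omega)
  have hdb : d b ≤ d (k + b) := hmon (Set.mem_Iic.2 (by omega)) (Set.mem_Iic.2 (by omega))
    (by omega)
  cases p <;> cases q <;> cases r <;> simp only [if_true, Bool.false_eq_true,
    Bool.true_eq_false, if_false] <;> linarith

end Mutant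

theorem mutant_4k_triangle_general (k : ℕ) (d : ℕ → ℝ)
    (hmono : ∀ a b : ℕ, a < b → b ≤ 2 * k → d a < d b)
    (hcirc : ∀ i j : ℤ,
      d (circAbs (4 * k) i).toNat + d (circAbs (4 * k) j).toNat
        ≥ d (circAbs (4 * k) (i + j)).toNat) :
    ∀ x y z : Bool × Fin (2 * k), x ≠ y → y ≠ z → z ≠ x →
      (fun u v : Bool × Fin (2 * k) =>
          if u.1 = v.1 then d (circAbs (2 * k) ((v.2 : ℤ) - (u.2 : ℤ))).toNat
          else d (k + (circAbs (2 * k) ((v.2 : ℤ) - (u.2 : ℤ))).toNat)) x y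
        + (fun u v : Bool × Fin (2 * k) =>
          if u.1 = v.1 then d (circAbs (2 * k) ((v.2 : ℤ) - (u.2 : ℤ))).toNat
          else d (k + (circAbs (2 * k) ((v.2 : ℤ) - (u.2 : ℤ))).toNat)) y z
        ≥ (fun u v : Bool × Fin (2 * k) =>
          if u.1 = v.1 then d (circAbs (2 * k) ((v.2 : ℤ) - (u.2 : ℤ))).toNat
          else d (k + (circAbs (2 * k) ((v.2 : ℤ) - (u.2 : ℤ))).toNat)) x z := by
  rintro ⟨p, i⟩ ⟨q, j⟩ ⟨r, l⟩ - - -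
  have hk : 0 < k := by have := i.pos; omega
  have hmon : MonotoneOn d (Set.Iic (2 * k)) :=
    StrictMonoOn.monotoneOn fun a _ b hb hab => hmono a b hab hb
  have hsplit : (l : ℤ) - i = (j - i) + (l - j) := by ring
  obtain ⟨hsub, hper⟩ := circAbs_add_le_and_perimeter_le (m := 2 * k) (by omega) (j - i) (l - j)
  have hhalf₁ := two_mul_circAbs_le (m := 2 * k) (by omega) (j - i)
  have hhalf₂ := two_mul_circAbs_le (m := 2 * k) (by omega) (l - j)
  have hnonneg₁ := circAbs_nonneg (m := 2 * k) (by omega) (j - i)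
  have hnonneg₂ := circAbs_nonneg (m := 2 * k) (by omega) (l - j)
  have hnonneg₃ := circAbs_nonneg (m := 2 * k) (by omega) (j - i + (l - j))
  dsimp only
  rw [hsplit, ge_iff_le]
  exact mutant_triangle hk hmon hcirc (by omega) (by omega) (by omega) (by omega) p q r

/-- Mutant construction for `n = 4k`: two `2k`-gons `A`, `B` (encoded as
`Bool × Fin (2k)`) with `d(A_i,A_j) = d(B_i,B_j) = d_{|j-i|_{2k}}` and
`d(A_i,B_j) = d_{k+|j-i|_{2k}}`.  If `0 < d_1 < ... < d_{2k}` satisfy the circular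
triangle inequality `d_{|i|_n} + d_{|j|_n} ≥ d_{|i+j|_n}` (with `d_0 = 0`), then this
distance satisfies the triangle inequality on every triple of distinct points. -/
theorem mutant_4k_triangle (k : ℕ) (hk : 2 ≤ k) (d : ℕ → ℝ)
    (hd0 : d 0 = 0)
    (hmono : ∀ a b : ℕ, a < b → b ≤ 2 * k → d a < d b)
    (hcirc : ∀ i j : ℤ,
      d (circAbs (4 * k) i).toNat + d (circAbs (4 * k) j).toNat
        ≥ d (circAbs (4 * k) (i + j)).toNat) :
    ∀ x y z : Bool × Fin (2 * k), x ≠ y → y ≠ z → z ≠ x →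
      (fun u v : Bool × Fin (2 * k) =>
          if u.1 = v.1 then d (circAbs (2 * k) ((v.2 : ℤ) - (u.2 : ℤ))).toNat
          else d (k + (circAbs (2 * k) ((v.2 : ℤ) - (u.2 : ℤ))).toNat)) x y
        + (fun u v : Bool × Fin (2 * k) =>
          if u.1 = v.1 then d (circAbs (2 * k) ((v.2 : ℤ) - (u.2 : ℤ))).toNat
          else d (k + (circAbs (2 * k) ((v.2 : ℤ) - (u.2 : ℤ))).toNat)) y z
        ≥ (fun u v : Bool × Fin (2 * k) =>
          if u.1 = v.1 then d (circAbs (2 * k) ((v.2 : ℤ) - (u.2 : ℤ))).toNat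
          else d (k + (circAbs (2 * k) ((v.2 : ℤ) - (u.2 : ℤ))).toNat)) x z :=
  mutant_4k_triangle_general k d hmono hcirc
end

section
/- In the mutant construction for n = 4k (two 2k-gons A, B with d(A_i,A_j) = d(B_i,B_j) = d_{|j-i|_{2k}} and d(A_i,B_j) = d_{k+|j-i|_{2k}}, where 0 < d_1 < ... < d_{2k}), every vertex has, among its distances to the other 4k-1 vertices, exactly two occurrences of each of d_1,...,d_{2k-1} and one occurrence of d_{2k}; hence this space is quasi-homogeneous of the same type as the circular space of type (d_1,...,d_{2k}) on 4k points. -/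
lemma circAbs_bddBelow (m : ℕ) (i : ℤ) :
    BddBelow {a : ℤ | ∃ l : ℤ, a = |i - l * (m : ℤ)|} := by
  refine ⟨0, ?_⟩
  rintro a ⟨l, rfl⟩
  exact abs_nonneg _

lemma circAbs_congr (m : ℕ) {i j : ℤ} (h : (m : ℤ) ∣ (i - j)) :
    circAbs m i = circAbs m j := by
  obtain ⟨t, ht⟩ := h
  unfold circAbs
  congr 1
  ext a
  constructor
  · rintro ⟨l, rfl⟩
    exact ⟨l - t, by rw [show i = j + (m : ℤ) * t by linarith]; ring_nf⟩
  · rintro ⟨l, rfl⟩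
    exact ⟨l + t, by rw [show i = j + (m : ℤ) * t by linarith]; ring_nf⟩

lemma circAbs_eq_min (m : ℕ) {i : ℤ} (h0 : 0 ≤ i) (h : i ≤ (m : ℤ)) :
    circAbs m i = min i ((m : ℤ) - i) := by
  unfold circAbs
  apply le_antisymm
  · rcases le_total i ((m : ℤ) - i) with hc | hc
    · rw [min_eq_left hc]
      exact csInf_le (circAbs_bddBelow m i)
        ⟨0, by rw [zero_mul, sub_zero, abs_of_nonneg h0]⟩
    · rw [min_eq_right hc]
      exact csInf_le (circAbs_bddBelow m i)
        ⟨1, by rw [one_mul, abs_of_nonpos (by linarith)]; ring⟩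
  · refine le_csInf ⟨|i|, 0, by simp⟩ ?_
    rintro a ⟨l, rfl⟩
    rcases le_or_gt l 0 with hl | hl
    · have hlm : l * (m : ℤ) ≤ 0 :=
        mul_nonpos_iff.mpr (Or.inr ⟨hl, by positivity⟩)
      calc min i ((m : ℤ) - i) ≤ i := min_le_left _ _
        _ ≤ |i - l * m| := by rw [abs_of_nonneg (by linarith)]; linarith
    · have h1l : 1 ≤ l := hl
      have hlm : (m : ℤ) ≤ l * m := by nlinarith [Int.natCast_nonneg m]
      calc min i ((m : ℤ) - i) ≤ (m : ℤ) - i := min_le_right _ _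
        _ ≤ |i - l * m| := by rw [abs_of_nonpos (by linarith)]; linarith

lemma circAbs_natCast_s8 (m j : ℕ) (hj : j ≤ m) :
    (circAbs m (j : ℤ)).toNat = min j (m - j) := by
  rw [circAbs_eq_min m (by positivity) (by exact_mod_cast hj)]
  rcases le_total j (m - j) with hc | hc
  · rw [min_eq_left (by omega : (j : ℤ) ≤ (m : ℤ) - j), min_eq_left hc]; omega
  · rw [min_eq_right (by omega : (m : ℤ) - j ≤ (j : ℤ)), min_eq_right hc]; omega

lemma mrange_succ' (n : ℕ) :
    Multiset.range (n + 1) = 0 ::ₘ (Multiset.range n).map (fun i => 1 + i) := by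
  rw [show n + 1 = 1 + n by omega, Multiset.range_add]
  rfl

lemma mrange_map_rev (n : ℕ) :
    (Multiset.range n).map (fun i => n - 1 - i) = Multiset.range n := by
  induction n with
  | zero => simp
  | succ n ih =>
    have key : (Multiset.range (n + 1)).map (fun i => n + 1 - 1 - i)
        = 0 ::ₘ (Multiset.range n).map (fun i => 1 + i) := by
      rw [Multiset.range_succ, Multiset.map_cons, show n + 1 - 1 - n = 0 by omega]
      congr 1
      have h1 : (Multiset.range n).map (fun i => n + 1 - 1 - i)
          = (Multiset.range n).map ((fun j => 1 + j) ∘ (fun i => n - 1 - i)) :=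
        Multiset.map_congr rfl (fun i hi => by
          rw [Multiset.mem_range] at hi
          simp only [Function.comp_apply]
          omega)
      rw [h1, ← Multiset.map_map, ih]
    rw [key, ← mrange_succ']

lemma map_min_range (c m : ℕ) (hm : 1 ≤ m) :
    (Multiset.range (2 * m)).map (fun j => c + min j (2 * m - j)) =
      (Multiset.range (m + 1)).map (fun i => c + i)
        + (Multiset.range (m - 1)).map (fun i => c + 1 + i) := by
  rw [show 2 * m = (m + 1) + (m - 1) by omega, Multiset.range_add,
    Multiset.map_add, Multiset.map_map]
  congr 1
  · refine Multiset.map_congr rfl fun j hj => ?_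
    rw [Multiset.mem_range] at hj
    omega
  · have h1 : (Multiset.range (m - 1)).map
        ((fun j => c + min j ((m + 1) + (m - 1) - j)) ∘ (fun x => (m + 1) + x))
        = (Multiset.range (m - 1)).map ((fun j => c + 1 + j) ∘ (fun i => (m - 1) - 1 - i)) :=
      Multiset.map_congr rfl (fun i hi => by
        rw [Multiset.mem_range] at hi
        simp only [Function.comp_apply]
        omega)
    rw [h1, ← Multiset.map_map, mrange_map_rev]

lemma map_min_range₀ (m : ℕ) (hm : 1 ≤ m) :
    (Multiset.range (2 * m)).map (fun j => min j (2 * m - j)) =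
      Multiset.range (m + 1)
        + (Multiset.range (m - 1)).map (fun i => 1 + i) := by
  have h := map_min_range 0 m hm
  simp only [zero_add, Multiset.map_id'] at h
  exact h

lemma fin_circ_map (N : ℕ) [NeZero N] (p : Fin N) (g : ℤ → ℝ) :
    (Finset.univ : Finset (Fin N)).val.map
        (fun i : Fin N => g (circAbs N ((i : ℤ) - (p : ℤ))))
      = (Multiset.range N).map (fun j : ℕ => g (circAbs N (j : ℤ))) := by
  have h1 : (Finset.univ : Finset (Fin N)).val.map
        (fun i : Fin N => g (circAbs N ((i : ℤ) - (p : ℤ))))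
      = (Finset.univ : Finset (Fin N)).val.map
        (fun i : Fin N => g (circAbs N (i : ℤ))) := by
    conv_lhs => rw [← Multiset.map_univ_val_equiv (Equiv.addRight p)]
    rw [Multiset.map_map]
    refine Multiset.map_congr rfl fun i _ => ?_
    simp only [Function.comp_apply, Equiv.coe_addRight]
    congr 1
    apply circAbs_congr
    have hv : ((i + p : Fin N) : ℤ) = ((i : ℤ) + (p : ℤ)) % (N : ℤ) := by
      rw [Fin.val_add]
      push_cast
      ring_nf
    refine ⟨-(((i : ℤ) + (p : ℤ)) / (N : ℤ)), ?_⟩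
    rw [hv, Int.emod_def]
    ring
  rw [h1]
  have h2 : (Multiset.range N) = (Finset.univ : Finset (Fin N)).val.map Fin.val := by
    have h3 := congrArg Finset.val (Fin.map_valEmbedding_univ (n := N))
    rw [Finset.map_val, Nat.Iio_eq_range, Finset.range_val] at h3
    exact h3.symm
  rw [h2]
  exact (Multiset.map_map (fun j : ℕ => g (circAbs N (j : ℤ))) Fin.val
    (Finset.univ : Finset (Fin N)).val).symm

lemma index_eq (k : ℕ) (hk : 1 ≤ k) :
    (Multiset.range (k + 1) + (Multiset.range (k - 1)).map (fun i => 1 + i))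
      + ((Multiset.range (k + 1)).map (fun i => k + i)
          + (Multiset.range (k - 1)).map (fun i => k + 1 + i))
    = Multiset.range (2 * k + 1)
        + (Multiset.range (2 * k - 1)).map (fun i => 1 + i) := by
  have F1 : (Multiset.range (k + 1)).map (fun i => k + i)
      = {k} + (Multiset.range k).map (fun i => k + 1 + i) := by
    rw [mrange_succ', Multiset.map_cons, Multiset.map_map]
    rw [Multiset.map_congr (rfl : Multiset.range k = Multiset.range k)
      (fun i _ => show ((fun i => k + i) ∘ (fun i => 1 + i)) i = k + 1 + i by
        simp only [Function.comp_apply]; omega)]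
    rw [← Multiset.singleton_add, add_zero]
  have F2 : (Multiset.range (2 * k - 1)).map (fun i => 1 + i)
      = (Multiset.range k).map (fun i => 1 + i)
        + (Multiset.range (k - 1)).map (fun i => k + 1 + i) := by
    rw [show 2 * k - 1 = k + (k - 1) by omega, Multiset.range_add,
      Multiset.map_add, Multiset.map_map]
    congr 1
    refine Multiset.map_congr rfl fun i _ => ?_
    simp only [Function.comp_apply]
    omega
  have F3 : Multiset.range (2 * k + 1)
      = Multiset.range (k + 1) + (Multiset.range k).map (fun i => k + 1 + i) := by
    rw [show 2 * k + 1 = (k + 1) + k by omega, Multiset.range_add]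
  have F4 : (Multiset.range k).map (fun i => 1 + i)
      = {k} + (Multiset.range (k - 1)).map (fun i => 1 + i) := by
    have hr : Multiset.range k = (k - 1) ::ₘ Multiset.range (k - 1) := by
      conv_lhs => rw [show k = (k - 1) + 1 by omega]
      rw [Multiset.range_succ]
    rw [hr, Multiset.map_cons, show 1 + (k - 1) = k by omega, ← Multiset.singleton_add]
  rw [F1, F2, F3, F4]
  abel

/-- In the mutant construction for `n = 4k` (two `2k`-gons with internal distances
`d_{|j-i|_{2k}}` and cross distances `d_{k+|j-i|_{2k}}`, where `0 < d_1 < ... < d_{2k}`),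
the multiset of distances from any fixed vertex to all `4k` vertices equals
`[0] + 2·[d_1,...,d_{2k-1}] + [d_{2k}]`, which is also the multiset of distances from a
fixed vertex of the circular space of type `(d_1,...,d_{2k})` on `4k` points; hence the
mutant is quasi-homogeneous of the same type as the circular space. -/
theorem mutant_4k_quasiHomogeneous (k : ℕ) (hk : 1 ≤ k) (d : ℕ → ℝ)
    (hd0 : d 0 = 0)
    (hmono : ∀ a b : ℕ, a < b → b ≤ 2 * k → d a < d b) :
    ∀ x : Bool × Fin (2 * k),
      ((Finset.univ : Finset (Bool × Fin (2 * k))).val.map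
          (fun y : Bool × Fin (2 * k) =>
            if x.1 = y.1 then d (circAbs (2 * k) ((y.2 : ℤ) - (x.2 : ℤ))).toNat
            else d (k + (circAbs (2 * k) ((y.2 : ℤ) - (x.2 : ℤ))).toNat)))
        = 0 ::ₘ d (2 * k) ::ₘ
            (2 • ((Multiset.range (2 * k - 1)).map fun i => d (i + 1))) ∧
      ((Finset.univ : Finset (Bool × Fin (2 * k))).val.map
          (fun y : Bool × Fin (2 * k) =>
            if x.1 = y.1 then d (circAbs (2 * k) ((y.2 : ℤ) - (x.2 : ℤ))).toNat
            else d (k + (circAbs (2 * k) ((y.2 : ℤ) - (x.2 : ℤ))).toNat)))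
        = (Multiset.range (4 * k)).map fun i => d (circAbs (4 * k) (i : ℤ)).toNat := by
  haveI : NeZero (2 * k) := ⟨by omega⟩
  rintro ⟨b, p⟩
  -- abbreviations
  set W : Multiset ℕ :=
    Multiset.range (2 * k + 1) + (Multiset.range (2 * k - 1)).map (fun i => 1 + i) with hW
  -- splitting the universe of pairs
  have hsplit : (Finset.univ : Finset (Bool × Fin (2 * k))).val
      = (Finset.univ : Finset (Fin (2 * k))).val.map (Prod.mk true)
        + (Finset.univ : Finset (Fin (2 * k))).val.map (Prod.mk false) := by
    rw [← Finset.univ_product_univ, Finset.product_val, Fintype.univ_bool]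
    have hb : ({true, false} : Finset Bool).val = true ::ₘ false ::ₘ 0 := by decide
    rw [hb, Multiset.cons_product, Multiset.cons_product, Multiset.zero_product, add_zero]
  -- the two basic circular maps
  have c1 : (Finset.univ : Finset (Fin (2 * k))).val.map
        (fun i : Fin (2 * k) => d (circAbs (2 * k) ((i : ℤ) - (p : ℤ))).toNat)
      = (Multiset.range (2 * k)).map (fun j : ℕ => d (circAbs (2 * k) (j : ℤ)).toNat) :=
    fin_circ_map (2 * k) p (fun z => d z.toNat)
  have c2 : (Finset.univ : Finset (Fin (2 * k))).val.map
        (fun i : Fin (2 * k) => d (k + (circAbs (2 * k) ((i : ℤ) - (p : ℤ))).toNat))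
      = (Multiset.range (2 * k)).map
          (fun j : ℕ => d (k + (circAbs (2 * k) (j : ℤ)).toNat)) :=
    fin_circ_map (2 * k) p (fun z => d (k + z.toNat))
  have c1' : (Multiset.range (2 * k)).map (fun j : ℕ => d (circAbs (2 * k) (j : ℤ)).toNat)
      = Multiset.map d ((Multiset.range (2 * k)).map (fun j => min j (2 * k - j))) := by
    rw [Multiset.map_map]
    refine Multiset.map_congr rfl fun j hj => ?_
    rw [Multiset.mem_range] at hj
    simp only [Function.comp_apply]
    rw [circAbs_natCast_s8 _ _ (le_of_lt hj)]
  have c2' : (Multiset.range (2 * k)).map (fun j : ℕ => d (k + (circAbs (2 * k) (j : ℤ)).toNat))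
      = Multiset.map d ((Multiset.range (2 * k)).map (fun j => k + min j (2 * k - j))) := by
    rw [Multiset.map_map]
    refine Multiset.map_congr rfl fun j hj => ?_
    rw [Multiset.mem_range] at hj
    simp only [Function.comp_apply]
    rw [circAbs_natCast_s8 _ _ (le_of_lt hj)]
  have hsum : (Multiset.range (2 * k)).map (fun j : ℕ => d (circAbs (2 * k) (j : ℤ)).toNat)
        + (Multiset.range (2 * k)).map (fun j : ℕ => d (k + (circAbs (2 * k) (j : ℤ)).toNat))
      = Multiset.map d W := by
    rw [c1', c2', ← Multiset.map_add, map_min_range₀ k hk, map_min_range k k hk,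
      index_eq k hk]
  -- the key identity for the left-hand side
  have key : ((Finset.univ : Finset (Bool × Fin (2 * k))).val.map
        (fun y : Bool × Fin (2 * k) =>
          if (b, p).1 = y.1 then d (circAbs (2 * k) ((y.2 : ℤ) - (((b, p).2 : Fin (2*k)) : ℤ))).toNat
          else d (k + (circAbs (2 * k) ((y.2 : ℤ) - (((b, p).2 : Fin (2*k)) : ℤ))).toNat)))
      = Multiset.map d W := by
    rw [hsplit, Multiset.map_add, Multiset.map_map, Multiset.map_map]
    cases b
    · have e1 : ((fun y : Bool × Fin (2 * k) =>
            if (false, p).1 = y.1 then d (circAbs (2 * k) ((y.2 : ℤ) - ((p : Fin (2*k)) : ℤ))).toNat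
            else d (k + (circAbs (2 * k) ((y.2 : ℤ) - ((p : Fin (2*k)) : ℤ))).toNat)) ∘ Prod.mk true)
          = fun i : Fin (2 * k) => d (k + (circAbs (2 * k) ((i : ℤ) - (p : ℤ))).toNat) := by
        funext i; simp
      have e2 : ((fun y : Bool × Fin (2 * k) =>
            if (false, p).1 = y.1 then d (circAbs (2 * k) ((y.2 : ℤ) - ((p : Fin (2*k)) : ℤ))).toNat
            else d (k + (circAbs (2 * k) ((y.2 : ℤ) - ((p : Fin (2*k)) : ℤ))).toNat)) ∘ Prod.mk false)
          = fun i : Fin (2 * k) => d (circAbs (2 * k) ((i : ℤ) - (p : ℤ))).toNat := by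
        funext i; simp
      rw [e1, e2, c1, c2, add_comm, hsum]
    · have e1 : ((fun y : Bool × Fin (2 * k) =>
            if (true, p).1 = y.1 then d (circAbs (2 * k) ((y.2 : ℤ) - ((p : Fin (2*k)) : ℤ))).toNat
            else d (k + (circAbs (2 * k) ((y.2 : ℤ) - ((p : Fin (2*k)) : ℤ))).toNat)) ∘ Prod.mk true)
          = fun i : Fin (2 * k) => d (circAbs (2 * k) ((i : ℤ) - (p : ℤ))).toNat := by
        funext i; simp
      have e2 : ((fun y : Bool × Fin (2 * k) =>
            if (true, p).1 = y.1 then d (circAbs (2 * k) ((y.2 : ℤ) - ((p : Fin (2*k)) : ℤ))).toNat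
            else d (k + (circAbs (2 * k) ((y.2 : ℤ) - ((p : Fin (2*k)) : ℤ))).toNat)) ∘ Prod.mk false)
          = fun i : Fin (2 * k) => d (k + (circAbs (2 * k) ((i : ℤ) - (p : ℤ))).toNat) := by
        funext i; simp
      rw [e1, e2, c1, c2, hsum]
  -- the first target
  have hr : Multiset.range (2 * k + 1)
      = 2 * k ::ₘ 0 ::ₘ (Multiset.range (2 * k - 1)).map (fun i => 1 + i) := by
    rw [Multiset.range_succ]
    congr 1
    conv_lhs => rw [show 2 * k = (2 * k - 1) + 1 by omega]
    rw [mrange_succ']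
  have hT1 : Multiset.map d W
      = 0 ::ₘ d (2 * k) ::ₘ
          (2 • ((Multiset.range (2 * k - 1)).map fun i => d (i + 1))) := by
    have eM : (Multiset.range (2 * k - 1)).map (fun i => d (i + 1))
        = Multiset.map d ((Multiset.range (2 * k - 1)).map (fun i => 1 + i)) := by
      rw [Multiset.map_map]
      exact Multiset.map_congr rfl fun i _ => by
        simp only [Function.comp_apply, Nat.add_comm]
    rw [hW, Multiset.map_add, hr, Multiset.map_cons, Multiset.map_cons, hd0,
      Multiset.cons_add, Multiset.cons_add, eM, ← two_nsmul, Multiset.cons_swap]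
  -- the second target
  have hT2 : ((Multiset.range (4 * k)).map fun i => d (circAbs (4 * k) (i : ℤ)).toNat)
      = Multiset.map d W := by
    rw [show (do let a ← Multiset.range (4 * k); pure ((a : ℤ)))
        = (Multiset.range (4 * k)).map (fun n : ℕ => (n : ℤ)) from by
      simp [Bind.bind, Multiset.bind_singleton, Pure.pure]]
    rw [Multiset.map_map]
    have s1 : (Multiset.range (4 * k)).map
          ((fun i : ℤ => d (circAbs (4 * k) i).toNat) ∘ (fun n : ℕ => (n : ℤ)))
        = Multiset.map d ((Multiset.range (4 * k)).map (fun j => min j (4 * k - j))) := by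
      rw [Multiset.map_map]
      refine Multiset.map_congr rfl fun j hj => ?_
      rw [Multiset.mem_range] at hj
      simp only [Function.comp_apply]
      rw [circAbs_natCast_s8 _ _ (le_of_lt hj)]
    rw [s1]
    congr 1
    have h4 := map_min_range₀ (2 * k) (by omega)
    rw [show 2 * (2 * k) = 4 * k by ring] at h4
    rw [h4, hW]
  exact ⟨key.trans hT1, key.trans hT2.symm⟩
end
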